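/- Let α, α^G : ℝ → ℝ and real constants a, G⁻, G⁺ satisfy 0 < a ≤ α(s) and G⁻ ≤ α^G(s) ≤ G⁺ for all s ∈ ℝ. If a ≥ ½(G⁺ − G⁻), then α^G(s) ≥ G⁺ − 2α(s) for every s ∈ ℝ, and consequently for every s ∈ ℝ and all real κ₁, κ₂ one has ½·α(s)·(κ₁ + κ₂)² + α^G(s)·κ₁·κ₂ ≥ G⁺·κ₁·κ₂. -/
import Mathlib


/-- Let `α, α^G : ℝ → ℝ` and real constants `a, G⁻, G⁺` satisfy `0 < a ≤ α(s)` and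
`G⁻ ≤ α^G(s) ≤ G⁺` for all `s ∈ ℝ`. If `a ≥ ½(G⁺ − G⁻)`, then `α^G(s) ≥ G⁺ − 2α(s)` for
every `s ∈ ℝ`, and consequently for every `s ∈ ℝ` and all real `κ₁, κ₂` one has
`½·α(s)·(κ₁ + κ₂)² + α^G(s)·κ₁·κ₂ ≥ G⁺·κ₁·κ₂`. -/
theorem two_phase_energy_lower_bound
    (α αG : ℝ → ℝ) (a Gminus Gplus : ℝ)
    (ha : 0 < a) (hαa : ∀ s : ℝ, a ≤ α s)
    (hGl : ∀ s : ℝ, Gminus ≤ αG s) (hGu : ∀ s : ℝ, αG s ≤ Gplus)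
    (h : a ≥ (1 / 2 : ℝ) * (Gplus - Gminus)) :
    (∀ s : ℝ, αG s ≥ Gplus - 2 * α s) ∧
    ∀ (s κ₁ κ₂ : ℝ),
      (1 / 2 : ℝ) * α s * (κ₁ + κ₂) ^ 2 + αG s * (κ₁ * κ₂) ≥ Gplus * (κ₁ * κ₂) := by
  have h1 : ∀ s : ℝ, αG s ≥ Gplus - 2 * α s := fun s => by
    have := hGl s; have := hαa s; linarith
  refine ⟨h1, fun s κ₁ κ₂ => ?_⟩
  rcases le_or_gt (κ₁ * κ₂) 0 with hk | hk
  · have hα : 0 < α s := lt_of_lt_of_le ha (hαa s)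
    have hGu' := hGu s
    nlinarith [sq_nonneg (κ₁ + κ₂), mul_nonneg (le_of_lt hα) (sq_nonneg (κ₁ + κ₂))]
  · have h2 := h1 s
    have hα : 0 < α s := lt_of_lt_of_le ha (hαa s)
    nlinarith [sq_nonneg (κ₁ - κ₂), mul_nonneg (le_of_lt hα) (sq_nonneg (κ₁ - κ₂))]
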